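/- For all complex numbers x, y and natural numbers n, the sum over k from 0 to n of x^k * (T_k(y) + (x*y - 1) * U_k(y)) equals x^(n+1) * y * U_n(y), where T_n and U_n are the Chebyshev polynomials of the first and second kind evaluated at y. -/
import Mathlib


open Finset

noncomputable def chebT (y : ℂ) : ℕ → ℂ
  | 0 => 1
  | 1 => y
  | n + 2 => 2 * y * chebT y (n + 1) - chebT y n

noncomputable def chebU (y : ℂ) : ℕ → ℂ
  | 0 => 1
  | 1 => 2 * y
  | n + 2 => 2 * y * chebU y (n + 1) - chebU y n

lemma chebTU (y : ℂ) : ∀ n, chebT y (n + 1) = chebU y (n + 1) - y * chebU y n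
  | 0 => by simp [chebT, chebU]; ring
  | 1 => by simp [chebT, chebU]; ring
  | n + 2 => by
    have h1 := chebTU y n
    have h2 : chebT y (n+2) = chebU y (n+2) - y * chebU y (n+1) := chebTU y (n + 1)
    have e3 : chebT y (n+3) = 2*y*chebT y (n+2) - chebT y (n+1) := rfl
    have e4 : chebU y (n+3) = 2*y*chebU y (n+2) - chebU y (n+1) := rfl
    have e5 : chebU y (n+2) = 2*y*chebU y (n+1) - chebU y n := rfl
    show chebT y (n+3) = chebU y (n+3) - y * chebU y (n+2)
    rw [e3, h2, e4, e5, h1]; ring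

theorem stmt18 (x y : ℂ) (n : ℕ) :
    ∑ k ∈ Finset.range (n + 1), x ^ k * (chebT y k + (x * y - 1) * chebU y k) =
      x ^ (n + 1) * y * chebU y n := by
  induction n with
  | zero => simp [chebT, chebU]
  | succ n ih =>
    rw [Finset.sum_range_succ, ih, chebTU y n]
    cases n with
    | zero => simp [chebU]; ring
    | succ m => rw [chebU]; ring
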